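/- arXiv:1307.5708 — 2 statements merged into one kernel-verified Lean document; each statement's English description precedes it below -/
import Mathlib

section
/- Localization of translated kernels via polynomial approximation: let ĝ : [0, λ_max] → ℝ be a kernel, let g ∈ ℝ^N be the signal with graph Fourier coefficients ĝ(λ_ℓ), fix vertices i and n with d_in := d_G(i,n) ≥ 1, and set K := d_in − 1. Then for every real polynomial p of degree at most K, |(T_i g)(n)| ≤ √N · sup_{λ ∈ [0, λ_max]} |ĝ(λ) − p(λ)|. -/
open Finset

/-- Graph Fourier transform: f̂(ℓ) = Σₙ f(n) χ_ℓ(n). -/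
noncomputable def gft {N : ℕ} (χ : Fin N → Fin N → ℝ) (f : Fin N → ℝ) (l : Fin N) : ℝ :=
  ∑ n, f n * χ l n

/-- Generalized convolution: (f∗g)(n) = Σ_ℓ f̂(ℓ) ĝ(ℓ) χ_ℓ(n). -/
noncomputable def gconv {N : ℕ} (χ : Fin N → Fin N → ℝ) (f g : Fin N → ℝ) : Fin N → ℝ :=
  fun n => ∑ l, gft χ f l * gft χ g l * χ l n

/-- Generalized translation: (T_i f)(n) = √N Σ_ℓ f̂(ℓ) χ_ℓ(i) χ_ℓ(n). -/
noncomputable def gtrans {N : ℕ} (χ : Fin N → Fin N → ℝ) (i : Fin N) (f : Fin N → ℝ) : Fin N → ℝ :=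
  fun n => Real.sqrt N * ∑ l, gft χ f l * χ l i * χ l n

/-- Generalized modulation: (M_k f)(n) = √N f(n) χ_k(n). -/
noncomputable def gmod {N : ℕ} (χ : Fin N → Fin N → ℝ) (k : Fin N) (f : Fin N → ℝ) : Fin N → ℝ :=
  fun n => Real.sqrt N * f n * χ k n

/-- The simple graph associated to the matrix L: edge between distinct m, n iff L m n ≠ 0. -/
def graphOf {N : ℕ} (L : Matrix (Fin N) (Fin N) ℝ) : SimpleGraph (Fin N) :=
  SimpleGraph.fromRel fun m n => L m n ≠ 0

/-- The signal on the graph whose graph Fourier coefficients are ĝ(λ_ℓ). -/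
noncomputable def kernelSig {N : ℕ} (χ : Fin N → Fin N → ℝ) (lam : Fin N → ℝ)
    (ghat : ℝ → ℝ) : Fin N → ℝ :=
  fun m => ∑ l, ghat (lam l) * χ l m

/-- Windowed graph Fourier atom g_{i,k} = M_k T_i g. -/
noncomputable def wgfAtom {N : ℕ} (χ : Fin N → Fin N → ℝ) (g : Fin N → ℝ)
    (i k : Fin N) : Fin N → ℝ :=
  gmod χ k (gtrans χ i g)

/-!
Every `χ_ℓ` is an eigenvector of `L`, so `∑_ℓ p(λ_ℓ) χ_ℓ(i) χ_ℓ(n) = p(L)_{in}` by completeness of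
the eigenbasis. A nonzero entry `(L^k)_{ab}` produces a walk of length at most `k` from `a` to `b` in
the graph of `L`, so `p(L)_{in} = 0` when `deg p < d_G(i,n)`. Subtracting this zero sum leaves
`(T_i g)(n) = √N ∑_ℓ (ĝ - p)(λ_ℓ) χ_ℓ(i) χ_ℓ(n)`, and since `ℓ ↦ χ_ℓ(i)` and `ℓ ↦ χ_ℓ(n)` are unit
vectors, `|χ_ℓ(i) χ_ℓ(n)| ≤ (χ_ℓ(i)² + χ_ℓ(n)²)/2` sums to at most `1`.
-/

open Polynomial Matrix

theorem Matrix.aeval_mulVec_of_mulVec_eq_smul {ι R : Type*} [Fintype ι] [DecidableEq ι]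
    [CommRing R] {L : Matrix ι ι R} {v : ι → R} {μ : R} (h : L *ᵥ v = μ • v) (p : R[X]) :
    aeval L p *ᵥ v = p.eval μ • v := by
  have := Module.End.aeval_apply_of_mem_apply_eq_smul (f := toLinAlgEquiv' L) (p := p) h
  rw [aeval_algEquiv, AlgHom.comp_apply] at this
  exact this

section Spectral

variable {ι R : Type*} [Fintype ι] [DecidableEq ι] [CommRing R]

theorem sum_mul_eq_ite_of_orthonormal {χ : ι → ι → R}
    (horth : ∀ l l', ∑ n, χ l n * χ l' n = if l = l' then 1 else 0) (m n : ι) :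
    ∑ l, χ l m * χ l n = if m = n then 1 else 0 := by
  have hrows : of χ * (of χ)ᵀ = 1 := by
    ext l l'
    simpa [mul_apply, one_apply] using horth l l'
  have hcols : (of χ)ᵀ * of χ = 1 := mul_eq_one_comm.mp hrows
  simpa [mul_apply, one_apply] using congrFun₂ hcols m n

theorem sum_eval_mul_eq_aeval_apply {κ : Type*} [Fintype κ] {L : Matrix ι ι R}
    {χ : κ → ι → R} {lam : κ → R}
    (hcomp : ∀ m n, ∑ l, χ l m * χ l n = if m = n then 1 else 0)
    (heig : ∀ l, L *ᵥ χ l = lam l • χ l) (p : R[X]) (i n : ι) :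
    ∑ l, p.eval (lam l) * (χ l i * χ l n) = aeval L p i n := by
  have hrow (l : κ) : p.eval (lam l) * χ l i = ∑ m, aeval L p i m * χ l m := by
    simpa [mulVec, dotProduct] using (congrFun (aeval_mulVec_of_mulVec_eq_smul (heig l) p) i).symm
  calc ∑ l, p.eval (lam l) * (χ l i * χ l n)
      = ∑ l, ∑ m, aeval L p i m * (χ l m * χ l n) := by
        simp_rw [← mul_assoc, hrow, sum_mul]
    _ = ∑ m, aeval L p i m * ∑ l, χ l m * χ l n := by
        rw [sum_comm]
        simp_rw [mul_sum]
    _ = aeval L p i n := by simp [hcomp]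

end Spectral

section Locality

variable {N : ℕ} {L : Matrix (Fin N) (Fin N) ℝ}

theorem exists_walk_length_le_of_pow_apply_ne_zero :
    ∀ {k : ℕ} {a b : Fin N}, (L ^ k) a b ≠ 0 → ∃ w : (graphOf L).Walk a b, w.length ≤ k
  | 0, a, b, h => by
    obtain rfl : a = b := by
      by_contra hab
      simp [one_apply, hab] at h
    exact ⟨.nil, le_rfl⟩
  | k + 1, a, b, h => by
    rw [pow_succ', mul_apply] at h
    obtain ⟨m, -, hm⟩ := exists_ne_zero_of_sum_ne_zero h
    obtain ⟨w, hw⟩ := exists_walk_length_le_of_pow_apply_ne_zero (right_ne_zero_of_mul hm)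
    by_cases ham : a = m
    · subst ham
      exact ⟨w, by omega⟩
    · have hadj : (graphOf L).Adj a m := by
        simp [graphOf, ham, left_ne_zero_of_mul hm]
      exact ⟨.cons hadj w, by rw [SimpleGraph.Walk.length_cons]; omega⟩

theorem pow_apply_eq_zero_of_lt_dist {k : ℕ} {a b : Fin N} (hk : k < (graphOf L).dist a b) :
    (L ^ k) a b = 0 := by
  by_contra h
  obtain ⟨w, hw⟩ := exists_walk_length_le_of_pow_apply_ne_zero h
  exact ((SimpleGraph.dist_le w).trans hw).not_gt hk

theorem aeval_apply_eq_zero_of_natDegree_lt_dist {a b : Fin N} (p : ℝ[X])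
    (hp : p.natDegree < (graphOf L).dist a b) : aeval L p a b = 0 := by
  rw [aeval_eq_sum_range, Matrix.sum_apply]
  refine sum_eq_zero fun k hk => ?_
  rw [Matrix.smul_apply, pow_apply_eq_zero_of_lt_dist (by rw [mem_range] at hk; omega), smul_zero]

end Locality

section Fourier

variable {N : ℕ} {χ : Fin N → Fin N → ℝ}

theorem gft_kernelSig
    (horth : ∀ l l', ∑ n, χ l n * χ l' n = if l = l' then (1 : ℝ) else 0)
    (lam : Fin N → ℝ) (ghat : ℝ → ℝ) (l : Fin N) :
    gft χ (kernelSig χ lam ghat) l = ghat (lam l) := by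
  simp only [gft, kernelSig, sum_mul, mul_assoc]
  rw [sum_comm]
  simp [← mul_sum, horth]

theorem gtrans_kernelSig
    (horth : ∀ l l', ∑ n, χ l n * χ l' n = if l = l' then (1 : ℝ) else 0)
    (lam : Fin N → ℝ) (ghat : ℝ → ℝ) (i n : Fin N) :
    gtrans χ i (kernelSig χ lam ghat) n = √N * ∑ l, ghat (lam l) * (χ l i * χ l n) := by
  simp only [gtrans, gft_kernelSig horth, mul_assoc]

end Fourier

theorem abs_sum_mul_mul_le {ι : Type*} [Fintype ι] {f u v : ι → ℝ} {C : ℝ}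
    (hu : ∑ l, u l ^ 2 = 1) (hv : ∑ l, v l ^ 2 = 1) (hf : ∀ l, |f l| ≤ C) :
    |∑ l, f l * (u l * v l)| ≤ C := by
  have hC : 0 ≤ C := by
    obtain ⟨l⟩ : Nonempty ι := by
      by_contra h
      simp [not_nonempty_iff.mp h] at hu
    exact (abs_nonneg _).trans (hf l)
  have hamgm (l : ι) : |u l * v l| ≤ (u l ^ 2 + v l ^ 2) / 2 := by
    rw [abs_mul, ← sq_abs (u l), ← sq_abs (v l)]
    linarith [two_mul_le_add_sq |u l| |v l|]
  calc |∑ l, f l * (u l * v l)|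
      ≤ ∑ l, |f l| * |u l * v l| := by
        simp only [← abs_mul]
        exact abs_sum_le_sum_abs _ _
    _ ≤ ∑ l, C * ((u l ^ 2 + v l ^ 2) / 2) := by gcongr with l <;> simp only [hf, hamgm]
    _ = C := by rw [← mul_sum, ← sum_div, sum_add_distrib, hu, hv]; ring

theorem translated_kernel_localization_general
    (N : ℕ) (L : Matrix (Fin N) (Fin N) ℝ)
    (χ : Fin N → Fin N → ℝ) (lam : Fin N → ℝ)
    (horth : ∀ l l' : Fin N, ∑ n, χ l n * χ l' n = if l = l' then (1 : ℝ) else 0)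
    (heig : ∀ l : Fin N, L.mulVec (χ l) = lam l • χ l)
    (lammax : ℝ) (hlam : ∀ l, lam l ∈ Set.Icc (0 : ℝ) lammax)
    (ghat : ℝ → ℝ) (i n : Fin N)
    (hd : 1 ≤ (graphOf L).dist i n)
    (p : Polynomial ℝ) (hdeg : p.natDegree ≤ (graphOf L).dist i n - 1)
    (C : ℝ) (hC : ∀ x ∈ Set.Icc (0 : ℝ) lammax, |ghat x - p.eval x| ≤ C) :
    |gtrans χ i (kernelSig χ lam ghat) n| ≤ Real.sqrt N * C := by
  have hcomp := sum_mul_eq_ite_of_orthonormal horth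
  have hp : ∑ l, p.eval (lam l) * (χ l i * χ l n) = 0 := by
    rw [sum_eval_mul_eq_aeval_apply hcomp heig,
      aeval_apply_eq_zero_of_natDegree_lt_dist p (by omega)]
  have hsplit : gtrans χ i (kernelSig χ lam ghat) n
      = √N * ∑ l, (ghat (lam l) - p.eval (lam l)) * (χ l i * χ l n) := by
    simp only [gtrans_kernelSig horth, sub_mul, sum_sub_distrib, hp, sub_zero]
  rw [hsplit, abs_mul, abs_of_nonneg (Real.sqrt_nonneg _)]
  gcongr
  exact abs_sum_mul_mul_le (by simpa [sq] using hcomp i i) (by simpa [sq] using hcomp n n)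
    fun l => hC _ (hlam l)

/-- Localization of translated kernels via polynomial approximation:
with K = d_G(i,n) − 1 ≥ 0, for every polynomial p of degree at most K and every
uniform bound C on |ĝ − p| over [0, λ_max], one has |(T_i g)(n)| ≤ √N · C. -/
theorem translated_kernel_localization
    (N : ℕ) (hN : 0 < N) (L : Matrix (Fin N) (Fin N) ℝ) (hL : L.IsSymm)
    (χ : Fin N → Fin N → ℝ) (lam : Fin N → ℝ)
    (horth : ∀ l l' : Fin N, ∑ n, χ l n * χ l' n = if l = l' then (1 : ℝ) else 0)
    (heig : ∀ l : Fin N, L.mulVec (χ l) = lam l • χ l)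
    (lammax : ℝ) (hlam : ∀ l, lam l ∈ Set.Icc (0 : ℝ) lammax)
    (ghat : ℝ → ℝ) (i n : Fin N)
    (hd : 1 ≤ (graphOf L).dist i n)
    (p : Polynomial ℝ) (hdeg : p.natDegree ≤ (graphOf L).dist i n - 1)
    (C : ℝ) (hC : ∀ x ∈ Set.Icc (0 : ℝ) lammax, |ghat x - p.eval x| ≤ C) :
    |gtrans χ i (kernelSig χ lam ghat) n| ≤ Real.sqrt N * C :=
  translated_kernel_localization_general N L χ lam horth heig lammax hlam ghat i n hd p hdeg C hC
end

section
/- Energy concentration of modulated kernels: assume χ_0(n) = 1/√N for all n. Suppose f ∈ ℝ^N and γ > 0 satisfy √N · Σ_{ℓ=1}^{N−1} μ_ℓ |f̂(ℓ)| ≤ |f̂(0)| / (1+γ), where μ_ℓ := max_{i} |χ_ℓ(i)|. Then for every k, |(M_k f)^(k)|^2 / ‖M_k f‖_2^2 ≥ γ^2 / (N + 3 + 4γ + γ^2), where (M_k f)^ denotes the graph Fourier transform of M_k f. -/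
open Finset

/-!
Expanding `f` in the orthonormal eigenbasis isolates the constant mode:
`√N f(n) = f̂(0) + √N Σ_{ℓ≠0} f̂(ℓ) χ_ℓ(n)`, where the sum is at most `S = Σ_{ℓ≠0} μ_ℓ |f̂(ℓ)|`
in absolute value. Both `(M_k f)^(k) = Σₙ √N f(n) χ_k(n)²` and `‖M_k f‖² = Σₙ (√N f(n))² χ_k(n)²`
are averages against the probability weights `χ_k(n)²`, so with `A = |f̂(0)|` and `t = √N S`
the peak is at least `A - t` and the energy at most `(A + t)²`. The hypothesis
`(1 + γ) t ≤ A` then gives `γ (A + t) ≤ (2 + γ) (A - t)`.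
-/

section WeightedAverage

variable {ι : Type*} [Fintype ι] {w x : ι → ℝ}

lemma abs_sum_mul_le_of_abs_le (hw : ∀ i, 0 ≤ w i) (hw1 : ∑ i, w i = 1) {B : ℝ}
    (hx : ∀ i, |x i| ≤ B) : |∑ i, x i * w i| ≤ B :=
  calc |∑ i, x i * w i| ≤ ∑ i, |x i * w i| := abs_sum_le_sum_abs _ _
    _ ≤ ∑ i, B * w i := sum_le_sum fun i _ => by
        rw [abs_mul, abs_of_nonneg (hw i)]
        exact mul_le_mul_of_nonneg_right (hx i) (hw i)
    _ = B := by rw [← mul_sum, hw1, mul_one]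

lemma abs_sum_mul_sub_le (hw : ∀ i, 0 ≤ w i) (hw1 : ∑ i, w i = 1) {m S : ℝ}
    (hx : ∀ i, |x i - m| ≤ S) : |∑ i, x i * w i - m| ≤ S := by
  have h : ∑ i, x i * w i - m = ∑ i, (x i - m) * w i := by
    simp only [sub_mul, sum_sub_distrib, ← mul_sum, hw1, mul_one]
  rw [h]
  exact abs_sum_mul_le_of_abs_le hw hw1 hx

lemma sum_sq_mul_le (hw : ∀ i, 0 ≤ w i) (hw1 : ∑ i, w i = 1) {m S : ℝ}
    (hx : ∀ i, |x i - m| ≤ S) : ∑ i, x i ^ 2 * w i ≤ (|m| + S) ^ 2 := by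
  have hxi : ∀ i, |x i ^ 2| ≤ (|m| + S) ^ 2 := fun i => by
    have : |x i| ≤ |m| + S := by
      linarith [abs_sub_abs_le_abs_sub (x i) m, hx i]
    rw [abs_pow]
    exact pow_le_pow_left₀ (abs_nonneg _) this 2
  exact (le_abs_self _).trans (abs_sum_mul_le_of_abs_le hw hw1 hxi)

end WeightedAverage

lemma abs_sum_mul_le_sum_mul_abs {ι κ : Type*} (s : Finset ι) (c : ι → ℝ) (χ : ι → κ → ℝ)
    (μ : ι → ℝ) (hμ : ∀ l n, |χ l n| ≤ μ l) (n : κ) :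
    |∑ l ∈ s, c l * χ l n| ≤ ∑ l ∈ s, μ l * |c l| :=
  (abs_sum_le_sum_abs _ _).trans <| sum_le_sum fun l _ => by
    rw [abs_mul, mul_comm]
    exact mul_le_mul_of_nonneg_right (hμ l n) (abs_nonneg _)

section Orthonormal

variable {N : ℕ} {χ : Fin N → Fin N → ℝ}

lemma sum_mul_eq_ite_of_orthonormal_rows
    (horth : ∀ l l' : Fin N, ∑ n, χ l n * χ l' n = if l = l' then (1 : ℝ) else 0)
    (n n' : Fin N) : ∑ l, χ l n * χ l n' = if n = n' then (1 : ℝ) else 0 := by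
  have hrows : Matrix.of χ * (Matrix.of χ).transpose = 1 := by
    ext l l'
    simpa [Matrix.mul_apply, Matrix.one_apply] using horth l l'
  -- a one-sided inverse of a square matrix is two-sided
  simpa [Matrix.mul_apply, Matrix.one_apply] using
    congrArg (fun B => B n n') (mul_eq_one_comm.mp hrows)

lemma sum_gft_mul_eq
    (horth : ∀ l l' : Fin N, ∑ n, χ l n * χ l' n = if l = l' then (1 : ℝ) else 0)
    (f : Fin N → ℝ) (n : Fin N) : ∑ l, gft χ f l * χ l n = f n := by
  simp only [gft, sum_mul]
  rw [sum_comm]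
  simp_rw [mul_assoc, ← mul_sum, sum_mul_eq_ite_of_orthonormal_rows horth]
  simp

lemma sum_erase_gft_mul_eq_sub
    (horth : ∀ l l' : Fin N, ∑ n, χ l n * χ l' n = if l = l' then (1 : ℝ) else 0)
    (f : Fin N → ℝ) (z n : Fin N) :
    ∑ l ∈ univ.erase z, gft χ f l * χ l n = f n - gft χ f z * χ z n := by
  rw [← sum_gft_mul_eq horth f n, ← sum_erase_add _ _ (mem_univ z), add_sub_cancel_right]

end Orthonormal

lemma gft_gmod_self {N : ℕ} (χ : Fin N → Fin N → ℝ) (f : Fin N → ℝ) (k : Fin N) :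
    gft χ (gmod χ k f) k = ∑ n, Real.sqrt N * f n * χ k n ^ 2 := by
  simp only [gft, gmod]
  exact sum_congr rfl fun n _ => by ring

lemma sum_gmod_sq {N : ℕ} (χ : Fin N → Fin N → ℝ) (f : Fin N → ℝ) (k : Fin N) :
    ∑ n, gmod χ k f n ^ 2 = ∑ n, (Real.sqrt N * f n) ^ 2 * χ k n ^ 2 := by
  simp only [gmod]
  exact sum_congr rfl fun n _ => by ring

lemma sq_abs_sub_le_sq_of_abs_sub_le {y a t : ℝ} (h : |y - a| ≤ t) (ht : t ≤ |a|) :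
    (|a| - t) ^ 2 ≤ y ^ 2 := by
  have hy : |a| - t ≤ |y| := by
    linarith [abs_sub_abs_le_abs_sub a y, abs_sub_comm a y]
  rw [← sq_abs y]
  exact pow_le_pow_left₀ (sub_nonneg.mpr ht) hy 2

lemma sq_mul_sq_add_le_of_one_add_mul_le {M A t γ : ℝ} (hM : 1 ≤ M) (hγ : 0 < γ)
    (ht : 0 ≤ t) (hAt : (1 + γ) * t ≤ A) :
    γ ^ 2 * (A + t) ^ 2 ≤ (M + 3 + 4 * γ + γ ^ 2) * (A - t) ^ 2 := by
  have hlin : γ * (A + t) ≤ (2 + γ) * (A - t) := by linarith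
  have hsq : (γ * (A + t)) ^ 2 ≤ ((2 + γ) * (A - t)) ^ 2 :=
    pow_le_pow_left₀ (mul_nonneg hγ.le (by nlinarith)) hlin 2
  nlinarith [sq_nonneg (A - t)]

/-- Energy concentration of modulated kernels: if χ₀ ≡ 1/√N and
√N · Σ_{ℓ≠0} μ_ℓ |f̂(ℓ)| ≤ |f̂(0)|/(1+γ), then for every k,
|(M_k f)^(k)|² / ‖M_k f‖₂² ≥ γ² / (N + 3 + 4γ + γ²), stated in the equivalent
cross-multiplied form. -/
theorem modulated_kernel_energy_concentration
    (N : ℕ) (hN : 0 < N) (χ : Fin N → Fin N → ℝ)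
    (horth : ∀ l l' : Fin N, ∑ n, χ l n * χ l' n = if l = l' then (1 : ℝ) else 0)
    (hχ0 : ∀ n, χ ⟨0, hN⟩ n = 1 / Real.sqrt N)
    (muL : Fin N → ℝ)
    (hmuL : ∀ l : Fin N, IsGreatest (Set.range fun j => |χ l j|) (muL l))
    (f : Fin N → ℝ) (γ : ℝ) (hγ : 0 < γ)
    (hcond : Real.sqrt N * ∑ l ∈ Finset.univ.erase (⟨0, hN⟩ : Fin N), muL l * |gft χ f l|
      ≤ |gft χ f ⟨0, hN⟩| / (1 + γ))
    (k : Fin N) :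
    γ ^ 2 * (∑ n, (gmod χ k f n) ^ 2) ≤
      ((N : ℝ) + 3 + 4 * γ + γ ^ 2) * (gft χ (gmod χ k f) k) ^ 2 := by
  set s := Real.sqrt N
  set a := gft χ f ⟨0, hN⟩
  set S := ∑ l ∈ univ.erase (⟨0, hN⟩ : Fin N), muL l * |gft χ f l|
  have hs : 0 < s := Real.sqrt_pos.mpr (by exact_mod_cast hN)
  have hμ : ∀ l n, |χ l n| ≤ muL l := fun l n => (hmuL l).2 ⟨n, rfl⟩
  have hS : 0 ≤ S :=
    sum_nonneg fun l _ => mul_nonneg ((abs_nonneg _).trans (hμ l k)) (abs_nonneg _)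
  have hw1 : ∑ n, χ k n ^ 2 = 1 := by simpa [sq] using horth k k
  have hdev : ∀ n, |s * f n - a| ≤ s * S := fun n => by
    have h := sum_erase_gft_mul_eq_sub horth f ⟨0, hN⟩ n
    rw [hχ0] at h
    rw [show s * f n - a = s * (f n - a * (1 / s)) by field_simp, abs_mul, abs_of_pos hs, ← h]
    exact mul_le_mul_of_nonneg_left (abs_sum_mul_le_sum_mul_abs _ _ χ muL hμ n) hs.le
  have hpeak : |gft χ (gmod χ k f) k - a| ≤ s * S := by
    rw [gft_gmod_self]
    exact abs_sum_mul_sub_le (fun n => sq_nonneg (χ k n)) hw1 hdev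
  have henergy : ∑ n, gmod χ k f n ^ 2 ≤ (|a| + s * S) ^ 2 := by
    rw [sum_gmod_sq]
    exact sum_sq_mul_le (fun n => sq_nonneg (χ k n)) hw1 hdev
  have hAt : (1 + γ) * (s * S) ≤ |a| := by
    rwa [le_div_iff₀ (by linarith), mul_comm] at hcond
  have ht : 0 ≤ s * S := mul_nonneg hs.le hS
  calc γ ^ 2 * ∑ n, gmod χ k f n ^ 2 ≤ γ ^ 2 * (|a| + s * S) ^ 2 := by gcongr
    _ ≤ ((N : ℝ) + 3 + 4 * γ + γ ^ 2) * (|a| - s * S) ^ 2 :=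
      sq_mul_sq_add_le_of_one_add_mul_le (by exact_mod_cast hN) hγ ht hAt
    _ ≤ _ := mul_le_mul_of_nonneg_left
      (sq_abs_sub_le_sq_of_abs_sub_le hpeak (by nlinarith)) (by positivity)
end
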